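/- arXiv:1504.04202 — 6 statements merged into one kernel-verified Lean document; each statement's English description precedes it below -/
import Mathlib

section
/- Let X be a Tychonoff (completely regular Hausdorff) space. Assume there exist an index set I, a family U = {U_i : i ∈ I} of open subsets of X, a set of points A = {a_i : i ∈ I} ⊆ X and a point z ∈ X such that: (i) a_i ∈ U_i for every i ∈ I; (ii) for each compact subset C of X, the set {i ∈ I : C ∩ U_i ≠ ∅} is finite; (iii) z is a cluster point of A, i.e., every neighborhood of z contains a point of A distinct from z. Then X is not an Ascoli space. -/
/-!
Choose bump functions `f i` with `f i (a i) = 1` vanishing off `U i`. Since every compact set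
meets only finitely many `U i`, `f i → 0` along the cofinite filter in the compact-open topology,
so `{0} ∪ {f i}` is compact. Joint continuity of evaluation at `(z, 0)` would give a
neighbourhood `W` of `z` with `f i < 1` on `W` for all but finitely many `i`; but `z` is an
accumulation point of the `a i`, so infinitely many `a i` lie in `W`, where `f i (a i) = 1`.
-/

open Topology

/-- A topological space `Y` is *Ascoli* if for every compact subset `K` of `C(Y, ℝ)`
(endowed with the compact-open topology), the evaluation map `(y, f) ↦ f y` is jointly
continuous on `Y × K`. -/
def IsAscoli (Y : Type*) [TopologicalSpace Y] : Prop :=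
  ∀ K : Set C(Y, ℝ), IsCompact K →
    Continuous fun p : Y × K => (p.2 : C(Y, ℝ)) p.1

open Filter Set

lemma CompletelyRegularSpace.exists_continuousMap_eq_one_eqOn_zero_compl {X : Type*}
    [TopologicalSpace X] [CompletelyRegularSpace X] {x : X} {U : Set X} (hU : IsOpen U)
    (hx : x ∈ U) : ∃ f : C(X, ℝ), f x = 1 ∧ EqOn f 0 Uᶜ := by
  obtain ⟨g, hg, hgx, hgU⟩ := CompletelyRegularSpace.completely_regular_isOpen x U hU hx
  refine ⟨⟨fun y => 1 - (g y : ℝ), by fun_prop⟩, by simp [hgx], fun y hy => ?_⟩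
  simp [hgU hy]

lemma ContinuousMap.tendsto_cofinite_of_eqOn_compl {ι X Y : Type*} [TopologicalSpace X]
    [TopologicalSpace Y] {U : ι → Set X}
    (hfin : ∀ C : Set X, IsCompact C → {i | (C ∩ U i).Nonempty}.Finite)
    {f : ι → C(X, Y)} {g : C(X, Y)} (hfg : ∀ i, EqOn (f i) g (U i)ᶜ) :
    Tendsto f cofinite (𝓝 g) := by
  refine (ContinuousMap.tendsto_compactOpen_iff_forall _ _).2 fun C hC => ?_
  refine tendsto_const_nhds.congr' <| eventually_cofinite.2 <| (hfin C hC).subset fun i hi => ?_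
  by_contra hdisj
  exact hi (ContinuousMap.ext fun x => (hfg i fun hxU => hdisj ⟨x, x.2, hxU⟩).symm)

lemma mapClusterPt_cofinite_of_mem_closure_range_diff {ι X : Type*} [TopologicalSpace X]
    [T1Space X] {a : ι → X} {z : X} (hz : z ∈ closure (range a \ {z})) :
    MapClusterPt z cofinite a := by
  have hacc : AccPt z (𝓟 (range a)) :=
    accPt_principal_iff_clusterPt.2 (mem_closure_iff_clusterPt.1 hz)
  refine mapClusterPt_iff_frequently.2 fun s hs => frequently_cofinite_iff_infinite.2 ?_
  have hacc_s : AccPt z (𝓟 (s ∩ range a)) :=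
    accPt_iff_frequently.2 <| ((accPt_iff_frequently.1 hacc).and_eventually hs).mono
      fun _ ⟨⟨hne, hy⟩, hys⟩ => ⟨hne, hys, hy⟩
  refine Set.Infinite.of_image a (s := a ⁻¹' s) ?_
  rw [image_preimage_eq_inter_range]
  exact Set.Infinite.of_accPt hacc_s

lemma IsAscoli.tendsto_eval_prod_cofinite {Y ι : Type*} [TopologicalSpace Y] (hY : IsAscoli Y)
    {f : ι → C(Y, ℝ)} {g : C(Y, ℝ)} (hf : Tendsto f cofinite (𝓝 g)) (y : Y) :
    Tendsto (fun p : Y × ι => f p.2 p.1) (𝓝 y ×ˢ cofinite) (𝓝 (g y)) := by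
  have hcont := (hY _ hf.isCompact_insert_range_of_cofinite).tendsto
    (y, ⟨g, mem_insert g _⟩)
  rw [nhds_prod_eq] at hcont
  have hf' : Tendsto (fun i => (⟨f i, mem_insert_of_mem g (mem_range_self i)⟩ :
      (insert g (range f) : Set C(Y, ℝ)))) cofinite (𝓝 ⟨g, mem_insert g _⟩) :=
    tendsto_subtype_rng.2 hf
  exact hcont.comp (tendsto_id.prodMap hf')

theorem stmt_5 {X : Type*} [TopologicalSpace X] [CompletelyRegularSpace X] [T2Space X]
    {I : Type*} (U : I → Set X) (a : I → X) (z : X)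
    (hUopen : ∀ i, IsOpen (U i))
    (haU : ∀ i, a i ∈ U i)
    (hfin : ∀ C : Set X, IsCompact C → {i : I | (C ∩ U i).Nonempty}.Finite)
    (hz : z ∈ closure (Set.range a \ {z})) :
    ¬ IsAscoli X := by
  intro hX
  choose f hf1 hf0 using fun i =>
    CompletelyRegularSpace.exists_continuousMap_eq_one_eqOn_zero_compl (hUopen i) (haU i)
  have hlim : Tendsto f cofinite (𝓝 0) := ContinuousMap.tendsto_cofinite_of_eqOn_compl hfin hf0
  have hsmall : ∀ᶠ p in 𝓝 z ×ˢ cofinite, f p.2 p.1 < 1 :=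
    hX.tendsto_eval_prod_cofinite hlim z (Iio_mem_nhds one_pos)
  obtain ⟨W, hW, S, hS, hWS⟩ := eventually_prod_iff.1 hsmall
  obtain ⟨i, hiW, hiS⟩ :=
    (((mapClusterPt_cofinite_of_mem_closure_range_diff hz).frequently hW).and_eventually hS).exists
  exact (hWS hiW hiS).ne (hf1 i)
end

section
/- Let X be a Tychonoff (completely regular Hausdorff) space such that there is a point z ∈ X with the properties that every point of X other than z is isolated, z is not isolated in X, and every compact subspace of X is finite. Then X is not an Ascoli space. -/
open Topology Filter Set

theorem stmt_6 {X : Type*} [TopologicalSpace X] [CompletelyRegularSpace X] [T2Space X]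
    (z : X)
    (hiso : ∀ x : X, x ≠ z → IsOpen ({x} : Set X))
    (hz : ¬ IsOpen ({z} : Set X))
    (hcfin : ∀ C : Set X, IsCompact C → C.Finite) :
    ¬ IsAscoli X := by
  classical
  intro hA
  set S := {x : X // x ≠ z} with hS
  have hclopen : ∀ x : S, IsClopen ({(x : X)} : Set X) :=
    fun x => ⟨isClosed_singleton, hiso x x.2⟩
  let f : S → C(X, ℝ) := fun x =>
    ⟨Set.indicator {(x : X)} 1,
      continuous_indicator (by simp [(hclopen x).frontier_eq]) continuous_const.continuousOn⟩
  have hf1 : ∀ x : S, f x (x : X) = 1 := fun x => by simp [f]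
  have hf0 : ∀ (x : S) (y : X), y ≠ (x : X) → f x y = 0 := fun x y hy => by
    simp [f, Set.indicator_of_notMem, hy]
  -- `f` tends to `0` along the cofinite filter
  have htend : Tendsto f cofinite (𝓝 (0 : C(X, ℝ))) := by
    rw [ContinuousMap.tendsto_iff_forall_isCompact_tendstoUniformlyOn]
    intro C hC
    have hCfin : C.Finite := hcfin C hC
    rw [Metric.tendstoUniformlyOn_iff]
    intro ε hε
    have hfin : {x : S | (x : X) ∈ C}.Finite :=
      hCfin.preimage (Subtype.coe_injective.injOn)
    rw [eventually_cofinite]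
    refine hfin.subset fun x hx => ?_
    simp only [mem_setOf_eq, not_forall] at hx
    obtain ⟨y, hyC, hy⟩ := hx
    by_contra hxC
    have : y ≠ (x : X) := by rintro rfl; exact hxC hyC
    apply hy
    rw [ContinuousMap.zero_apply, hf0 x y this, dist_self]
    exact hε
  -- the compact set
  set K : Set C(X, ℝ) := insert 0 (Set.range f) with hK
  have hKc : IsCompact K := htend.isCompact_insert_range_of_cofinite
  have hcont := hA K hKc
  set k0 : K := ⟨0, Set.mem_insert _ _⟩ with hk0
  have hCA : Tendsto (fun p : X × K => (p.2 : C(X, ℝ)) p.1) (𝓝 (z, k0)) (𝓝 (0 : ℝ)) := by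
    have h := hcont.continuousAt (x := (z, k0))
    simpa [ContinuousAt, hk0] using h
  have hball := hCA (Metric.ball_mem_nhds (0 : ℝ) (by norm_num : (0:ℝ) < 1/2))
  rw [nhds_prod_eq, Filter.mem_map, Filter.mem_prod_iff] at hball
  obtain ⟨U, hU, V, hV, hUV⟩ := hball
  -- the set of isolated points in U is infinite
  have hUinf : {x : S | (x : X) ∈ U}.Infinite := by
    by_contra hinf
    have hfin : {x : S | (x : X) ∈ U}.Finite := Set.not_infinite.mp hinf
    have hF : ((↑) '' {x : S | (x : X) ∈ U} : Set X).Finite := hfin.image _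
    have hopen : IsOpen (interior U \ ((↑) '' {x : S | (x : X) ∈ U})) :=
      isOpen_interior.sdiff hF.isClosed
    have heq : interior U \ ((↑) '' {x : S | (x : X) ∈ U}) = {z} := by
      ext y
      constructor
      · rintro ⟨hyU, hyF⟩
        by_contra hyz
        exact hyF ⟨⟨y, hyz⟩, show y ∈ U from interior_subset hyU, rfl⟩
      · rintro rfl
        refine ⟨mem_interior_iff_mem_nhds.mpr hU, ?_⟩
        rintro ⟨x, -, hx⟩
        exact x.2 hx
    exact hz (heq ▸ hopen)
  -- f x ∈ V for cofinitely many x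
  have htendK : Tendsto (fun x : S => (⟨f x, Set.mem_insert_of_mem _ ⟨x, rfl⟩⟩ : K))
      cofinite (𝓝 k0) := by
    rw [tendsto_subtype_rng]
    exact htend
  have hVcof : {x : S | (⟨f x, Set.mem_insert_of_mem _ ⟨x, rfl⟩⟩ : K) ∈ V}ᶜ.Finite := by
    have h := htendK hV
    rwa [Filter.mem_map, Filter.mem_cofinite] at h
  obtain ⟨x, hxU, hxV⟩ := (hUinf.diff hVcof).nonempty
  have hmem : ((x : X), (⟨f x, Set.mem_insert_of_mem _ ⟨x, rfl⟩⟩ : K)) ∈ U ×ˢ V :=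
    ⟨hxU, not_not.mp hxV⟩
  have := hUV hmem
  simp only [Set.mem_preimage, Metric.mem_ball] at this
  rw [show ((⟨f x, Set.mem_insert_of_mem _ ⟨x, rfl⟩⟩ : K) : C(X, ℝ)) ((x:X)) = 1 from hf1 x] at this
  norm_num at this
end

section
/- Let E be a real normed space. Then E endowed with its weak topology is an Ascoli space if and only if E is finite-dimensional. -/
/-!
If `E` is finite-dimensional, its weak topology is the norm topology, which is locally compact,
so evaluation is continuous. Conversely, if `E` is infinite-dimensional, so is its dual, which
therefore contains linearly independent functionals `gₙ → 0`. Weakly compact sets are norm bounded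
(Banach–Steinhaus), so `gₙ → 0` uniformly on them and `{0} ∪ {gₙ}` is compact in `C(E_w, ℝ)`.
Joint continuity of evaluation at `(0, 0)` yields a weak neighbourhood `U` of `0` with `|gₙ| ≤ 1`
on `U` for all large `n`. But `U` contains a subspace `⋂ ker φᵢ` for finitely many functionals
`φᵢ`, and a functional bounded on a subspace vanishes there, so all large `gₙ` lie in the
finite-dimensional span of the `φᵢ`.
-/

open Topology

open Filter Set

theorem IsAscoli.tendsto_eval {Y : Type*} [TopologicalSpace Y] (hY : IsAscoli Y)
    {f : ℕ → C(Y, ℝ)} {f₀ : C(Y, ℝ)} (hf : Tendsto f atTop (𝓝 f₀)) (y₀ : Y) :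
    Tendsto (fun p : Y × ℕ ↦ f p.2 p.1) (𝓝 y₀ ×ˢ atTop) (𝓝 (f₀ y₀)) := by
  let K : Set C(Y, ℝ) := insert f₀ (range f)
  let F : ℕ → K := fun n ↦ ⟨f n, mem_insert_of_mem _ (mem_range_self n)⟩
  have hF : Tendsto F atTop (𝓝 ⟨f₀, mem_insert _ _⟩) := tendsto_subtype_rng.mpr hf
  exact ((hY K hf.isCompact_insert_range).tendsto (y₀, ⟨f₀, mem_insert _ _⟩)).comp
    (by rw [nhds_prod_eq]; exact tendsto_id.prodMap hF)

theorem IsAscoli.of_locallyCompactSpace (Y : Type*) [TopologicalSpace Y] [LocallyCompactSpace Y] :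
    IsAscoli Y := fun _ _ ↦
  ContinuousEval.continuous_eval.comp
    ((continuous_subtype_val.comp continuous_snd).prodMk continuous_fst)

theorem LinearMap.exists_finset_forall_mem_span_of_norm_le_one {𝕜 E F : Type*}
    [NontriviallyNormedField 𝕜] [AddCommGroup E] [Module 𝕜 E] [AddCommGroup F] [Module 𝕜 F]
    {B : E →ₗ[𝕜] F →ₗ[𝕜] 𝕜} {U : Set (WeakBilin B)} (hU : U ∈ 𝓝 0) :
    ∃ s : Finset F, ∀ f : E →ₗ[𝕜] 𝕜, (∀ x ∈ U, ‖f x‖ ≤ 1) →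
      f ∈ Submodule.span 𝕜 (Set.range fun y : s ↦ B.flip y) := by
  obtain ⟨V, hV, hVU⟩ := B.hasBasis_weakBilin.mem_iff.mp hU
  obtain ⟨s, r, hr, rfl⟩ := (SeminormFamily.basisSets_iff _).mp hV
  refine ⟨s, fun f hf ↦ mem_span_of_iInf_ker_le_ker fun x hx ↦ ?_⟩
  simp only [Submodule.mem_iInf, LinearMap.mem_ker, Subtype.forall] at hx
  have hU : ∀ c : 𝕜, c • x ∈ U := fun c ↦ hVU <| (Seminorm.mem_ball_zero _).2 <|
    Seminorm.finset_sup_apply_lt hr fun y hy ↦ by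
      show ‖B (c • x) y‖ < r
      rwa [map_smul, LinearMap.smul_apply, ← B.flip_apply, hx y hy, smul_zero, norm_zero]
  by_contra hfx
  obtain ⟨c, hc⟩ := NormedField.exists_lt_norm 𝕜 ‖f x‖⁻¹
  have hbounded := hf _ (hU c)
  rw [map_smul, norm_smul] at hbounded
  exact ((inv_lt_iff_one_lt_mul₀ (norm_pos_iff.2 hfx)).1 hc).not_ge hbounded

section FiniteDimensional

variable {𝕜 : Type*} [RCLike 𝕜]

theorem FiniteDimensional.of_strongDual {E : Type*} [NormedAddCommGroup E] [NormedSpace 𝕜 E]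
    [FiniteDimensional 𝕜 (StrongDual 𝕜 E)] : FiniteDimensional 𝕜 E :=
  have : FiniteDimensional 𝕜 (StrongDual 𝕜 (StrongDual 𝕜 E)) :=
    .of_injective (ContinuousLinearMap.coeLM 𝕜) ContinuousLinearMap.coe_injective
  .of_injective (NormedSpace.inclusionInDoubleDualLi 𝕜).toLinearMap
    (NormedSpace.inclusionInDoubleDualLi 𝕜).injective

theorem exists_linearIndependent_tendsto_zero {V : Type*} [NormedAddCommGroup V]
    [NormedSpace 𝕜 V] (h : ¬ FiniteDimensional 𝕜 V) :
    ∃ v : ℕ → V, LinearIndependent 𝕜 v ∧ Tendsto v atTop (𝓝 0) := by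
  let b := Module.Basis.ofVectorSpace 𝕜 V
  have : Infinite (Module.Basis.ofVectorSpaceIndex 𝕜 V) :=
    not_finite_iff_infinite.mp fun _ ↦ h b.finiteDimensional_of_finite
  let w : ℕ → V := fun n ↦ b (Infinite.natEmbedding _ n)
  have hw : ∀ n, w n ≠ 0 := fun n ↦ b.ne_zero _
  let c : ℕ → 𝕜 := fun n ↦ ((‖w n‖ * (n + 1) : ℝ)⁻¹ : ℝ)
  have hc : ∀ n, c n ≠ 0 := fun n ↦ RCLike.ofReal_ne_zero.2 <| inv_ne_zero <|
    mul_ne_zero (norm_ne_zero_iff.2 (hw n)) n.cast_add_one_ne_zero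
  refine ⟨fun n ↦ c n • w n,
    (b.linearIndependent.comp _ (Infinite.natEmbedding _).injective).units_smul
      fun n ↦ Units.mk0 (c n) (hc n), ?_⟩
  rw [tendsto_zero_iff_norm_tendsto_zero]
  refine tendsto_one_div_add_atTop_nhds_zero_nat.congr fun n ↦ ?_
  have : 0 < ‖w n‖ := norm_pos_iff.2 (hw n)
  rw [norm_smul, RCLike.norm_ofReal, abs_of_pos (by positivity)]
  field_simp

end FiniteDimensional

section WeakSpace

variable {𝕜 E : Type*} [RCLike 𝕜] [NormedAddCommGroup E] [NormedSpace 𝕜 E]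

theorem IsCompact.isBounded_toWeakSpace_symm_image {s : Set (WeakSpace 𝕜 E)} (hs : IsCompact s) :
    Bornology.IsBounded ((toWeakSpace 𝕜 E).symm '' s) := by
  let g : s → StrongDual 𝕜 (StrongDual 𝕜 E) := fun x ↦
    NormedSpace.inclusionInDoubleDualLi 𝕜 ((toWeakSpace 𝕜 E).symm x)
  have hg : ∀ φ : StrongDual 𝕜 E, ∃ C, ∀ x, ‖g x φ‖ ≤ C := fun φ ↦
    have ⟨C, hC⟩ := hs.exists_bound_of_continuousOn
      (WeakBilin.eval_continuous (topDualPairing 𝕜 E).flip φ).continuousOn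
    ⟨C, fun x ↦ hC x x.2⟩
  obtain ⟨C, hC⟩ := banach_steinhaus hg
  refine isBounded_iff_forall_norm_le.2 ⟨C, forall_mem_image.2 fun x hx ↦ ?_⟩
  simpa only [g, LinearIsometry.norm_map] using hC ⟨x, hx⟩

noncomputable def StrongDual.toWeakSpaceContinuousMap (φ : StrongDual 𝕜 E) : C(WeakSpace 𝕜 E, 𝕜) :=
  ⟨φ, WeakBilin.eval_continuous (topDualPairing 𝕜 E).flip φ⟩

theorem StrongDual.continuous_toWeakSpaceContinuousMap :
    Continuous (toWeakSpaceContinuousMap : StrongDual 𝕜 E → C(WeakSpace 𝕜 E, 𝕜)) := by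
  refine continuous_iff_continuousAt.2 fun φ ↦
    (ContinuousMap.tendsto_compactOpen_iff_forall _ _).2 fun K hK ↦ ?_
  have := isCompact_iff_compactSpace.mp hK
  obtain ⟨M, hM, hKM⟩ := hK.isBounded_toWeakSpace_symm_image.exists_pos_norm_le
  refine (LipschitzWith.of_dist_le' fun ψ χ ↦ (ContinuousMap.dist_le (by positivity)).2 fun x ↦ ?_
    : LipschitzWith _ fun ψ ↦ (toWeakSpaceContinuousMap ψ).restrict K).continuous.continuousAt
  calc dist (ψ ((toWeakSpace 𝕜 E).symm x)) (χ ((toWeakSpace 𝕜 E).symm x))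
      = ‖(ψ - χ) ((toWeakSpace 𝕜 E).symm x)‖ := by rw [dist_eq_norm, sub_apply]
    _ ≤ ‖ψ - χ‖ * ‖(toWeakSpace 𝕜 E).symm x‖ := (ψ - χ).le_opNorm _
    _ ≤ M * dist ψ χ := by
      rw [dist_eq_norm, mul_comm]
      gcongr
      exact hKM _ (mem_image_of_mem _ x.2)

end WeakSpace

theorem FiniteDimensional.of_isAscoli_weakSpace {E : Type*} [NormedAddCommGroup E]
    [NormedSpace ℝ E] (h : IsAscoli (WeakSpace ℝ E)) : FiniteDimensional ℝ E := by
  by_contra hE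
  obtain ⟨g, hg, hg0⟩ := exists_linearIndependent_tendsto_zero (𝕜 := ℝ) (V := StrongDual ℝ E)
    fun _ ↦ hE .of_strongDual
  have hG := StrongDual.continuous_toWeakSpaceContinuousMap.tendsto 0 |>.comp hg0
  obtain ⟨U, hU, N, hN⟩ : ∃ U ∈ 𝓝 (0 : WeakSpace ℝ E), ∃ N, ∀ n ≥ N, ∀ x ∈ U, ‖g n x‖ ≤ 1 := by
    obtain ⟨pU, hpU, pN, hpN, hp⟩ := eventually_prod_iff.1 <|
      (h.tendsto_eval hG 0).eventually (Metric.closedBall_mem_nhds _ one_pos)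
    obtain ⟨N, hN⟩ := eventually_atTop.1 hpN
    refine ⟨{x | pU x}, hpU, N, fun n hn x hx ↦ ?_⟩
    have : |g n x - (0 : StrongDual ℝ E) 0| ≤ 1 := hp hx (hN n hn)
    simpa using this
  obtain ⟨s, hs⟩ := LinearMap.exists_finset_forall_mem_span_of_norm_le_one hU
  have hgN : LinearIndependent ℝ fun n ↦ (g (n + N) : E →ₗ[ℝ] ℝ) :=
    (hg.comp _ (add_left_injective N)).map' (ContinuousLinearMap.coeLM ℝ)
      (LinearMap.ker_eq_bot.mpr ContinuousLinearMap.coe_injective)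
  have : Finite ℕ := hgN.finite_of_le_span_finite _ _ <|
    range_subset_iff.2 fun n ↦ hs _ (hN _ (Nat.le_add_left N n))
  exact not_finite ℕ

theorem stmt_9 {E : Type*} [NormedAddCommGroup E] [NormedSpace ℝ E] :
    IsAscoli (WeakSpace ℝ E) ↔ FiniteDimensional ℝ E := by
  refine ⟨FiniteDimensional.of_isAscoli_weakSpace, fun hE ↦ ?_⟩
  have : FiniteDimensional ℝ (WeakSpace ℝ E) := hE
  have : LocallyCompactSpace (WeakSpace ℝ E) :=
    .of_finiteDimensional_of_complete ℝ (WeakSpace ℝ E)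
  exact .of_locallyCompactSpace _
end

section
/- Let p : X → Y be a continuous open surjection from a topological space X onto a regular Hausdorff space Y. If X is an Ascoli space, then Y is an Ascoli space. -/
open Topology

theorem stmt_10 {X Y : Type*} [TopologicalSpace X] [TopologicalSpace Y]
    [RegularSpace Y] [T2Space Y] (p : X → Y)
    (hcont : Continuous p) (hopen : IsOpenMap p) (hsurj : Function.Surjective p)
    (hX : IsAscoli X) : IsAscoli Y := by
  intro K hK
  set q : C(X, Y) := ⟨p, hcont⟩ with hq
  have hcomp : Continuous fun f : C(Y, ℝ) => f.comp q := ContinuousMap.continuous_precomp q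
  have hK' : IsCompact ((fun f : C(Y, ℝ) => f.comp q) '' K) := hK.image hcomp
  have hquot : IsQuotientMap (Prod.map p (id : K → K)) :=
    (hopen.prodMap IsOpenMap.id).isQuotientMap (hcont.prodMap continuous_id)
      (hsurj.prodMap Function.surjective_id)
  rw [hquot.continuous_iff]
  have heval := hX _ hK'
  have hmap : Continuous fun r : X × K =>
      (⟨r.2.1.comp q, ⟨r.2.1, r.2.2, rfl⟩⟩ : ((fun f : C(Y, ℝ) => f.comp q) '' K)) :=
    Continuous.subtype_mk (hcomp.comp (continuous_subtype_val.comp continuous_snd)) _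
  exact heval.comp (continuous_fst.prodMk hmap)
end

section
/- The closed unit ball of the Banach space ℓ1 of absolutely summable real sequences, endowed with the subspace topology inherited from the weak topology of ℓ1, is not an Ascoli space. -/
open Topology

/-- The Banach space `ℓ¹` of absolutely summable real sequences. -/
abbrev ell1 : Type := lp (fun _ : ℕ => ℝ) 1

/-- The closed unit ball of `ℓ¹`, viewed as a subset of `ℓ¹` equipped with its weak
topology. -/
def ell1WeakBall : Set (WeakSpace ℝ ell1) :=
  {x | ‖(toWeakSpace ℝ ell1).symm x‖ ≤ 1}

/-!
By Schur's theorem weakly convergent sequences in `ℓ¹` converge in norm. A weakly compact set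
embeds continuously and injectively into `ℕ → ℝ`, so it is metrizable, and Schur's theorem makes it
norm compact. On norm compact sets the coordinate functionals `eₙ*` tend to `0` uniformly, so
`eₙ* → 0` in `C(B, ℝ)` and `{0} ∪ {eₙ*}` is compact. Evaluation is nevertheless discontinuous at
`(0, 0)`: along a free ultrafilter `𝒰`, `(eₙ - eₘ) / 2 → 0` weakly as `n, m → 𝒰`, while
`eₙ*((eₙ - eₘ) / 2) = 1 / 2` whenever `n ≠ m`.
-/

open Filter Finset
open scoped ENNReal

instance Filter.curry_neBot {α β : Type*} {l : Filter α} {m : Filter β} [l.NeBot] [m.NeBot] :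
    (l.curry m).NeBot :=
  ⟨fun h => NeBot.ne ‹_› (by simpa using mem_curry_iff.mp (h ▸ mem_bot : ∅ ∈ l.curry m))⟩

theorem tendsto_toWeakSpace_iff {𝕜 E α : Type*} [CommSemiring 𝕜] [TopologicalSpace 𝕜]
    [ContinuousAdd 𝕜] [ContinuousConstSMul 𝕜 𝕜] [AddCommMonoid E] [Module 𝕜 E]
    [TopologicalSpace E] {l : Filter α} {f : α → E} {x : E} :
    Tendsto (fun a => toWeakSpace 𝕜 E (f a)) l (𝓝 (toWeakSpace 𝕜 E x)) ↔
      ∀ φ : E →L[𝕜] 𝕜, Tendsto (fun a => φ (f a)) l (𝓝 (φ x)) := by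
  have : IsInducing fun (y : WeakSpace 𝕜 E) (φ : E →L[𝕜] 𝕜) => φ y := ⟨rfl⟩
  rw [this.tendsto_nhds_iff, tendsto_pi_nhds]
  rfl

theorem tendsto_toWeakSpace_sub_of_norm_le {E ι : Type*} [NormedAddCommGroup E]
    [NormedSpace ℝ E] {u : ι → E} {C : ℝ} (hu : ∀ i, ‖u i‖ ≤ C) (𝒰 : Ultrafilter ι) :
    Tendsto (fun p : ι × ι => toWeakSpace ℝ E (u p.1 - u p.2)) (𝒰 ×ˢ 𝒰) (𝓝 0) := by
  rw [← (toWeakSpace ℝ E).map_zero, tendsto_toWeakSpace_iff]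
  intro φ
  obtain ⟨L, -, hL⟩ := (isCompact_closedBall (0 : ℝ) (‖φ‖ * C)).ultrafilter_le_nhds
    (𝒰.map (φ ∘ u)) <| by
      rw [Ultrafilter.coe_map]
      exact tendsto_principal.mpr (.of_forall fun i =>
        mem_closedBall_zero_iff.mpr (φ.le_opNorm_of_le (hu i)))
  have hL : Tendsto (φ ∘ u) 𝒰 (𝓝 L) := hL
  simpa using (hL.comp tendsto_fst).sub (hL.comp tendsto_snd)

namespace Ell1

lemma summable_abs (x : ell1) : Summable fun i => |x i| := by
  simpa using (lp.memℓp x).summable (by norm_num)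

lemma norm_eq_sum_add_tsum (x : ell1) (M : ℕ) :
    ‖x‖ = ∑ i ∈ range M, |x i| + ∑' i, |x (i + M)| := by
  rw [(summable_abs x).sum_add_tsum_nat_add]
  simp [lp.norm_eq_tsum_rpow (by norm_num : (0 : ℝ) < (1 : ℝ≥0∞).toReal)]

section SignFunctional

def boolSign (b : Bool) : ℝ := if b then 1 else -1

lemma abs_boolSign (b : Bool) : |boolSign b| = 1 := by
  cases b <;> simp [boolSign]

lemma boolSign_decide_nonneg_mul (r : ℝ) : boolSign (decide (0 ≤ r)) * r = |r| := by
  by_cases h : 0 ≤ r <;> simp [boolSign, h, abs_of_nonneg, abs_of_neg, not_le.mp]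

lemma boolSign_not_decide_nonneg_mul (r : ℝ) : boolSign (!decide (0 ≤ r)) * r = -|r| := by
  by_cases h : 0 ≤ r <;> simp [boolSign, h, abs_of_nonneg, abs_of_neg, not_le.mp]

noncomputable def signSeq (g : ℕ → Bool) : lp (fun _ : ℕ => ℝ) ∞ :=
  ⟨fun i => boolSign (g i), memℓp_infty ⟨1, by rintro _ ⟨i, rfl⟩; simp [abs_boolSign]⟩⟩

noncomputable def signFunctional (g : ℕ → Bool) : ell1 →L[ℝ] ℝ :=
  lp.dualPairing ∞ 1 (fun _ => ContinuousLinearMap.mul ℝ ℝ) (K := 1)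
    (fun _ => ContinuousLinearMap.opNorm_mul_le ℝ ℝ) (signSeq g)

lemma signFunctional_apply (g : ℕ → Bool) (x : ell1) :
    signFunctional g x = ∑' i, boolSign (g i) * x i := rfl

lemma continuous_signFunctional_apply (x : ell1) : Continuous fun g => signFunctional g x := by
  simp only [signFunctional_apply]
  refine continuous_tsum (fun i => ?_) (summable_abs x) fun i g => ?_
  · exact ((continuous_of_discreteTopology (f := boolSign)).comp (continuous_apply i)).mul
      continuous_const
  · simp [abs_boolSign]

lemma signFunctional_apply_eq_sum_add_tsum (g : ℕ → Bool) (x : ell1) (M : ℕ) :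
    signFunctional g x =
      ∑ i ∈ range M, boolSign (g i) * x i + ∑' i, boolSign (g (i + M)) * x (i + M) := by
  rw [signFunctional_apply]
  refine (Summable.sum_add_tsum_nat_add M ?_).symm
  refine .of_norm_bounded (summable_abs x) fun i => ?_
  simp [abs_boolSign]

lemma signFunctional_sub_eq_two_mul_tsum (y : ℕ → Bool) (x : ell1) (M : ℕ) :
    signFunctional (fun i => if i < M then y i else decide (0 ≤ x i)) x -
      signFunctional (fun i => if i < M then y i else !decide (0 ≤ x i)) x =
        2 * ∑' i, |x (i + M)| := by
  simp only [signFunctional_apply_eq_sum_add_tsum _ x M, add_lt_iff_neg_right, not_lt_zero,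
    if_false, boolSign_decide_nonneg_mul, boolSign_not_decide_nonneg_mul, tsum_neg]
  have head : ∀ t : ℕ → Bool, ∑ i ∈ range M, boolSign (if i < M then y i else t i) * x i =
      ∑ i ∈ range M, boolSign (y i) * x i :=
    fun t => Finset.sum_congr rfl fun i hi => by rw [if_pos (mem_range.mp hi)]
  simp only [head]
  ring

/-- Baire category in the compact space of sign patterns: one cylinder of patterns is uniformly
good for all large `k`, and the two patterns of that cylinder that agree with, resp. oppose, the
signs of `w k` beyond `M` differ on `w k` by twice its tail. -/
lemma exists_tail_le_of_forall_tendsto_signFunctional {w : ℕ → ell1}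
    (hw : ∀ g, Tendsto (fun k => signFunctional g (w k)) atTop (𝓝 0)) {δ : ℝ} (hδ : 0 < δ) :
    ∃ N M, ∀ k ≥ N, ∑' i, |w k (i + M)| ≤ δ := by
  set F : ℕ → Set (ℕ → Bool) := fun N => {g | ∀ k ≥ N, |signFunctional g (w k)| ≤ δ}
  have hF_closed : ∀ N, IsClosed (F N) := fun N => by
    simp only [F, Set.ofPred_forall]
    exact isClosed_iInter fun k => isClosed_iInter fun _ =>
      isClosed_le (continuous_signFunctional_apply _).abs continuous_const
  have hF_cover : ⋃ N, F N = Set.univ := Set.eq_univ_of_forall fun g =>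
    Set.mem_iUnion.mpr (eventually_atTop.mp
      ((hw g).abs.eventually (ge_mem_nhds (by simpa using hδ))))
  obtain ⟨N, x, hx⟩ := nonempty_interior_of_iUnion_of_closed hF_closed hF_cover
  obtain ⟨_, ⟨y, M, rfl⟩, -, hyF⟩ :=
    (PiNat.isTopologicalBasis_cylinders fun _ => Bool).exists_subset_of_mem_open hx isOpen_interior
  refine ⟨N, M, fun k hk => ?_⟩
  have hmem : ∀ t : ℕ → Bool, (fun i => if i < M then y i else t i) ∈ F N := fun t =>
    interior_subset (hyF (PiNat.mem_cylinder_iff.mpr fun i hi => if_pos hi))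
  have hpos := hmem (fun i => decide (0 ≤ w k i)) k hk
  have hneg := hmem (fun i => !decide (0 ≤ w k i)) k hk
  have := (signFunctional_sub_eq_two_mul_tsum y (w k) M).symm.trans_le
    ((le_abs_self _).trans (abs_sub _ _))
  linarith

end SignFunctional

/-- Schur's theorem. -/
theorem tendsto_of_tendsto_toWeakSpace {w : ℕ → ell1} {x : ell1}
    (h : Tendsto (fun k => toWeakSpace ℝ ell1 (w k)) atTop (𝓝 (toWeakSpace ℝ ell1 x))) :
    Tendsto w atTop (𝓝 x) := by
  have hnull : ∀ φ : ell1 →L[ℝ] ℝ, Tendsto (fun k => φ (w k - x)) atTop (𝓝 0) := fun φ => by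
    simpa using (tendsto_toWeakSpace_iff.mp h φ).sub_const (φ x)
  rw [tendsto_iff_norm_sub_tendsto_zero, Metric.tendsto_atTop]
  intro ε hε
  obtain ⟨N, M, htail⟩ :=
    exists_tail_le_of_forall_tendsto_signFunctional (fun g => hnull _) (half_pos hε)
  have hhead : Tendsto (fun k => ∑ i ∈ range M, |(w k - x) i|) atTop (𝓝 0) := by
    simpa using (tendsto_finsetSum (range M) fun i _ => (hnull (lp.evalCLM ℝ _ 1 i)).abs).congr
      (f₂ := fun k => ∑ i ∈ range M, |(w k - x) i|) fun k => rfl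
  obtain ⟨N', hN'⟩ := Metric.tendsto_atTop.mp hhead _ (half_pos hε)
  refine ⟨max N N', fun k hk => ?_⟩
  have h₁ := htail k (le_of_max_le_left hk)
  have h₂ := hN' k (le_of_max_le_right hk)
  rw [Real.dist_0_eq_abs, abs_of_nonneg (by positivity)] at h₂ ⊢
  linarith [norm_eq_sum_add_tsum (w k - x) M]

noncomputable def weakCoord (n : ℕ) : C(WeakSpace ℝ ell1, ℝ) :=
  ⟨fun x => (toWeakSpace ℝ ell1).symm x n, WeakBilin.eval_continuous _ (lp.evalCLM ℝ _ 1 n)⟩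

@[simp]
lemma weakCoord_toWeakSpace (n : ℕ) (x : ell1) : weakCoord n (toWeakSpace ℝ ell1 x) = x n := rfl

lemma isCompact_image_symm_of_isCompact {S : Set (WeakSpace ℝ ell1)} (hS : IsCompact S) :
    IsCompact ((toWeakSpace ℝ ell1).symm '' S) := by
  have : CompactSpace S := isCompact_iff_compactSpace.mp hS
  have hcoords : Continuous fun (x : S) n => weakCoord n x :=
    continuous_pi fun n => (weakCoord n).continuous.comp continuous_subtype_val
  have hinj : Function.Injective fun (x : S) n => weakCoord n x :=
    fun x y h => Subtype.ext (lp.ext h)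
  have : TopologicalSpace.MetrizableSpace S :=
    (hcoords.isClosedEmbedding hinj).isEmbedding.metrizableSpace
  have hcont : Continuous fun x : S => (toWeakSpace ℝ ell1).symm x :=
    continuous_iff_seqContinuous.mpr fun _ _ hu => tendsto_of_tendsto_toWeakSpace
      ((continuous_subtype_val.tendsto _).comp hu)
  simpa [Set.image_eq_range] using isCompact_range hcont

lemma tendstoUniformlyOn_apply_of_isCompact {K : Set ell1} (hK : IsCompact K) :
    TendstoUniformlyOn (fun n (x : ell1) => x n) 0 atTop K := by
  rw [← tendstoLocallyUniformlyOn_iff_tendstoUniformlyOn_of_compact hK,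
    Metric.tendstoLocallyUniformlyOn_iff]
  intro ε hε x _
  refine ⟨Metric.ball x (ε / 2), mem_nhdsWithin_of_mem_nhds (Metric.ball_mem_nhds _ (half_pos hε)),
    ?_⟩
  filter_upwards [(summable_abs x).tendsto_atTop_zero.eventually (gt_mem_nhds (half_pos hε))]
    with n hn y hy
  have hyx : |(y - x) n| ≤ ‖y - x‖ := lp.norm_apply_le_norm one_ne_zero (y - x) n
  rw [Metric.mem_ball, dist_eq_norm] at hy
  simp only [Pi.zero_apply, dist_zero_left, Real.norm_eq_abs]
  have : y n = (y - x) n + x n := by simp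
  rw [this]
  linarith [abs_add_le ((y - x) n) (x n)]

lemma tendsto_weakCoord : Tendsto weakCoord atTop (𝓝 0) := by
  rw [ContinuousMap.tendsto_iff_forall_isCompact_tendstoUniformlyOn]
  intro S hS
  exact ((tendstoUniformlyOn_apply_of_isCompact (isCompact_image_symm_of_isCompact hS)).comp
    (toWeakSpace ℝ ell1).symm).mono (Set.subset_preimage_image _ _)

lemma zero_mem_ell1WeakBall : (0 : WeakSpace ℝ ell1) ∈ ell1WeakBall := by
  simp [ell1WeakBall]

lemma norm_single_half (n : ℕ) : ‖(lp.single 1 n (2⁻¹ : ℝ) : ell1)‖ ≤ 2⁻¹ := by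
  simp [lp.norm_single]

lemma single_half_sub_single_half_mem_ell1WeakBall (n m : ℕ) :
    toWeakSpace ℝ ell1 (lp.single 1 n (2⁻¹ : ℝ) - lp.single 1 m 2⁻¹) ∈ ell1WeakBall := by
  have := (norm_sub_le _ _).trans (add_le_add (norm_single_half n) (norm_single_half m))
  simpa [ell1WeakBall] using this.trans (by norm_num)

lemma weakCoord_single_half_sub_single_half {n m : ℕ} (h : m ≠ n) :
    weakCoord n (toWeakSpace ℝ ell1 (lp.single 1 n (2⁻¹ : ℝ) - lp.single 1 m 2⁻¹)) = 2⁻¹ := by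
  rw [weakCoord_toWeakSpace]
  simp [lp.single_apply, h.symm]

end Ell1

open Ell1 in
theorem stmt_11 : ¬ IsAscoli ell1WeakBall := by
  intro hA
  set f : ℕ → C(ell1WeakBall, ℝ) := fun n => (weakCoord n).restrict ell1WeakBall
  have hf : Tendsto f atTop (𝓝 0) :=
    ((ContinuousMap.continuous_restrict _).tendsto 0).comp tendsto_weakCoord
  set K : Set C(ell1WeakBall, ℝ) := insert 0 (Set.range f)
  have hev := (hA K hf.isCompact_insert_range).tendsto
    (⟨0, zero_mem_ell1WeakBall⟩, ⟨0, Set.mem_insert _ _⟩)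
  have h𝒰 : (hyperfilter ℕ : Filter ℕ) ≤ atTop := Nat.cofinite_eq_atTop ▸ hyperfilter_le_cofinite
  -- unlike `𝒰 ×ˢ 𝒰`, the curried filter makes `n ≠ m` hold eventually
  set L : Filter (ℕ × ℕ) := (hyperfilter ℕ : Filter ℕ).curry (hyperfilter ℕ)
  have hv : Tendsto (fun p : ℕ × ℕ => (⟨_, single_half_sub_single_half_mem_ell1WeakBall p.1 p.2⟩ :
      ell1WeakBall)) L (𝓝 ⟨0, zero_mem_ell1WeakBall⟩) :=
    tendsto_subtype_rng.mpr ((tendsto_toWeakSpace_sub_of_norm_le norm_single_half _).mono_left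
      curry_le_prod)
  have hk : Tendsto (fun p : ℕ × ℕ => (⟨f p.1, Set.mem_insert_of_mem _ ⟨_, rfl⟩⟩ : K)) L
      (𝓝 ⟨0, Set.mem_insert _ _⟩) :=
    tendsto_subtype_rng.mpr (hf.comp ((tendsto_fst.mono_left curry_le_prod).mono_right h𝒰))
  have hhalf : ∀ᶠ p : ℕ × ℕ in L,
      f p.1 ⟨_, single_half_sub_single_half_mem_ell1WeakBall p.1 p.2⟩ = 2⁻¹ :=
    eventually_curry_iff.mpr (.of_forall fun n =>
      Eventually.mono (h𝒰 (eventually_ne_atTop n)) fun _ hm =>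
        weakCoord_single_half_sub_single_half hm)
  have := tendsto_nhds_unique ((hev.comp (hv.prodMk_nhds hk)).congr' hhalf) tendsto_const_nhds
  norm_num at this
end

section
/- Let (T, Σ, μ) be a probability measure space and let (g_n) be a sequence of measurable real-valued functions on T that is stochastically independent with respect to μ, uniformly bounded (there is M such that |g_n(t)| ≤ M for all n and t), and satisfies ∫_T g_n dμ = 0 for every n. Then for every bounded measurable function f : T → ℝ, the integrals ∫_T f·g_n dμ converge to 0 as n → ∞. -/
open Topology Filter MeasureTheory ProbabilityTheory
open scoped RealInnerProductSpace

/-!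
Mean-zero independent functions are pairwise orthogonal in `L²(μ)`, and uniform boundedness bounds
their `L²` norms. For an orthogonal family `(v i)` with `‖v i‖ ≤ K`, Bessel's inequality gives
`∑ ⟪x, v i⟫² ≤ K² ‖x‖²`, so the coefficients `⟪x, v i⟫` are square-summable and tend to `0`.
Taking `x = f` in `L²(μ)` gives the theorem.
-/

section Orthogonal

variable {ι E : Type*} [NormedAddCommGroup E] [InnerProductSpace ℝ E] {v : ι → E}

theorem norm_sum_smul_sq_of_orthogonal (hv : Pairwise fun i j => ⟪v i, v j⟫ = 0)
    (s : Finset ι) (c : ι → ℝ) :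
    ‖∑ i ∈ s, c i • v i‖ ^ 2 = ∑ i ∈ s, c i ^ 2 * ‖v i‖ ^ 2 := by
  classical
  rw [← real_inner_self_eq_norm_sq, sum_inner]
  refine Finset.sum_congr rfl fun i hi => ?_
  rw [inner_sum, Finset.sum_eq_single_of_mem i hi fun j _ hji => by
    rw [real_inner_smul_left, real_inner_smul_right, hv hji.symm, mul_zero, mul_zero]]
  rw [real_inner_smul_left, real_inner_smul_right, real_inner_self_eq_norm_sq]
  ring

theorem sum_inner_sq_le_of_orthogonal (hv : Pairwise fun i j => ⟪v i, v j⟫ = 0) {K : ℝ}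
    (hK : ∀ i, ‖v i‖ ≤ K) (x : E) (s : Finset ι) :
    ∑ i ∈ s, ⟪x, v i⟫ ^ 2 ≤ (K * ‖x‖) ^ 2 := by
  set S := ∑ i ∈ s, ⟪x, v i⟫ ^ 2
  set y := ∑ i ∈ s, ⟪x, v i⟫ • v i
  have hS : 0 ≤ S := Finset.sum_nonneg fun i _ => sq_nonneg _
  have hxy : ⟪x, y⟫ = S := by
    simp only [y, S, inner_sum, real_inner_smul_right, sq]
  have hy : ‖y‖ ^ 2 ≤ K ^ 2 * S := by
    rw [norm_sum_smul_sq_of_orthogonal hv, Finset.mul_sum]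
    refine Finset.sum_le_sum fun i _ => ?_
    rw [mul_comm]
    exact mul_le_mul_of_nonneg_right (pow_le_pow_left₀ (norm_nonneg _) (hK i) 2) (sq_nonneg _)
  have hCS : S ≤ ‖x‖ * ‖y‖ := hxy ▸ real_inner_le_norm x y
  have hS2 : S * S ≤ (K * ‖x‖) ^ 2 * S :=
    calc S * S ≤ ‖x‖ ^ 2 * ‖y‖ ^ 2 := by nlinarith
      _ ≤ ‖x‖ ^ 2 * (K ^ 2 * S) := by gcongr
      _ = (K * ‖x‖) ^ 2 * S := by ring
  rcases hS.eq_or_lt with hS0 | hSpos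
  · rw [← hS0]; positivity
  · exact le_of_mul_le_mul_right hS2 hSpos

theorem tendsto_inner_cofinite_of_orthogonal (hv : Pairwise fun i j => ⟪v i, v j⟫ = 0) {K : ℝ}
    (hK : ∀ i, ‖v i‖ ≤ K) (x : E) :
    Tendsto (fun i => ⟪x, v i⟫) cofinite (𝓝 0) := by
  have hsq : Tendsto (fun i => ⟪x, v i⟫ ^ 2) cofinite (𝓝 0) :=
    (summable_of_sum_le (fun _ => sq_nonneg _)
      (sum_inner_sq_le_of_orthogonal hv hK x)).tendsto_cofinite_zero
  have habs := (Real.continuous_sqrt.tendsto 0).comp hsq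
  simp only [Function.comp_def, Real.sqrt_sq_eq_abs, Real.sqrt_zero] at habs
  exact (tendsto_zero_iff_abs_tendsto_zero _).mpr habs

end Orthogonal

section L2

variable {α : Type*} [MeasurableSpace α] {μ : Measure α}

theorem MemLp.inner_toLp_eq_integral_mul {f g : α → ℝ} (hf : MemLp f 2 μ) (hg : MemLp g 2 μ) :
    ⟪hf.toLp f, hg.toLp g⟫ = ∫ a, f a * g a ∂μ := by
  rw [L2.inner_def]
  refine integral_congr_ae ?_
  filter_upwards [hf.coeFn_toLp, hg.coeFn_toLp] with a hfa hga
  rw [hfa, hga, real_inner_eq_re_inner, RCLike.inner_apply, conj_trivial, RCLike.re_to_real,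
    mul_comm]

theorem ProbabilityTheory.IndepFun.integral_mul_eq_zero_of_integral_eq_zero {X Y : α → ℝ} (hXY : IndepFun X Y μ)
    (hX : AEStronglyMeasurable X μ) (hY : AEStronglyMeasurable Y μ) (hX0 : ∫ a, X a ∂μ = 0) :
    ∫ a, X a * Y a ∂μ = 0 := by
  simpa [hX0] using hXY.integral_mul_eq_mul_integral hX hY

end L2

theorem stmt_14 {T : Type*} [MeasurableSpace T] (μ : Measure T) [IsProbabilityMeasure μ]
    (g : ℕ → T → ℝ) (hgmeas : ∀ n, Measurable (g n))
    (hindep : iIndepFun (m := fun _ : ℕ => (inferInstance : MeasurableSpace ℝ)) g μ)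
    (M : ℝ) (hbdd : ∀ n t, |g n t| ≤ M)
    (hmean : ∀ n, ∫ t, g n t ∂μ = 0)
    (f : T → ℝ) (hfmeas : Measurable f) (C : ℝ) (hfbdd : ∀ t, |f t| ≤ C) :
    Tendsto (fun n => ∫ t, f t * g n t ∂μ) atTop (𝓝 0) := by
  have hg2 : ∀ n, MemLp (g n) 2 μ := fun n =>
    .of_bound (hgmeas n).aestronglyMeasurable M (.of_forall fun t => hbdd n t)
  have hf2 : MemLp f 2 μ := .of_bound hfmeas.aestronglyMeasurable C (.of_forall hfbdd)
  have horth : Pairwise fun n m => ⟪(hg2 n).toLp (g n), (hg2 m).toLp (g m)⟫ = 0 :=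
    fun n m hnm => (MemLp.inner_toLp_eq_integral_mul _ _).trans <|
      (hindep.indepFun hnm).integral_mul_eq_zero_of_integral_eq_zero
        (hgmeas n).aestronglyMeasurable (hgmeas m).aestronglyMeasurable (hmean n)
  have hnorm : ∀ n, ‖(hg2 n).toLp (g n)‖ ≤ _ := fun n =>
    Lp.norm_le_of_ae_bound (abs_nonneg M) <| by
      filter_upwards [(hg2 n).coeFn_toLp] with t ht
      rw [ht, Real.norm_eq_abs]
      exact (hbdd n t).trans (le_abs_self M)
  have h := tendsto_inner_cofinite_of_orthogonal horth hnorm (hf2.toLp f)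
  rw [Nat.cofinite_eq_atTop] at h
  simpa only [MemLp.inner_toLp_eq_integral_mul] using h
end
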